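/- arXiv:1805.12075 — 3 statements merged into one kernel-verified Lean document; each statement's English description precedes it below -/
import Mathlib

section
/- Let α ∈ ℂ, η ∈ ⋀²V_ℂ, β ∈ ⋀⁴V_ℂ, not all zero, satisfy vol(η∧η − 2αβ) = 0. Then Z := {(v,ℓ) ∈ V_ℂ ⊕ V_ℂ^∨ : α·v + ℓ⌟η + η∧v + ℓ⌟β = 0} is a 4-dimensional complex subspace of V_ℂ ⊕ V_ℂ^∨ on which the quadratic form q(v,ℓ) := 2·ℓ(v) vanishes identically (i.e. Z is a maximal isotropic subspace for q), and Z is the graph of a nondegenerate antisymmetric linear map f : V_ℂ → V_ℂ^∨ if and only if η∧η ≠ 0. -/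
/-!
Concrete model of the linear algebra of O'Grady's "Compact tori associated to hyperkähler
manifolds of Kummer type".

`V` is a free ℤ-module of rank 4; we model `V_ℂ = V ⊗ ℂ` as `Fin 4 → ℂ` (standard integral
structure), and its dual `V_ℂ^∨` also as `Fin 4 → ℂ` via the dot-product pairing
`⟨ℓ, v⟩ = ℓ ⬝ᵥ v` (dual basis coordinates).  The volume form `vol : ⋀⁴V → ℤ` is the one
with `vol(e₀∧e₁∧e₂∧e₃) = 1`.  We model `⋀²V_ℂ` (and `⋀²V_ℂ^∨`) as `Fin 6 → ℂ` using the
basis `e₀∧e₁, e₀∧e₂, e₀∧e₃, e₁∧e₂, e₁∧e₃, e₂∧e₃` (resp. the dual one).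
-/

noncomputable section

open Matrix Complex

/-- Model of `V_ℂ` (and of its dual `V_ℂ^∨`). -/
abbrev Vc : Type := Fin 4 → ℂ

/-- Model of `⋀²V_ℂ` (and of `⋀²V_ℂ^∨`), coordinates w.r.t. the basis
`e₀∧e₁, e₀∧e₂, e₀∧e₃, e₁∧e₂, e₁∧e₃, e₂∧e₃`. -/
abbrev W2 : Type := Fin 6 → ℂ

/-- The wedge product `v ∧ w ∈ ⋀²V_ℂ` of two vectors. -/
def w2 (v w : Vc) : W2 :=
  ![v 0 * w 1 - v 1 * w 0, v 0 * w 2 - v 2 * w 0, v 0 * w 3 - v 3 * w 0,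
    v 1 * w 2 - v 2 * w 1, v 1 * w 3 - v 3 * w 1, v 2 * w 3 - v 3 * w 2]

/-- `vol(a ∧ b)` for `a, b ∈ ⋀²V_ℂ`: the nondegenerate symmetric pairing `( , )` on `⋀²V_ℂ`.
(The same formula computes the dual volume form `vol^∨` on `⋀²V_ℂ^∨` in dual coordinates.) -/
def volp (a b : W2) : ℂ :=
  a 0 * b 5 - a 1 * b 4 + a 2 * b 3 + a 3 * b 2 - a 4 * b 1 + a 5 * b 0

/-- The isomorphism `ι : ⋀²(V_ℂ^∨) → ⋀²V_ℂ` defined by the pairing `( , )`: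
it satisfies `vol (ι Ω ∧ v ∧ w) = Ω(v,w)` for all `v, w`. -/
def iotaMap (Ω : W2) : W2 := ![Ω 5, -Ω 4, Ω 3, Ω 2, -Ω 1, Ω 0]

/-- The map `Φ_θ` on decomposable elements: for `x = (v,g)` and `y = (w,h)` in
`V_ℂ ⊕ V_ℂ^∨`, `Φ_θ(x ∧ y) = (θ₁·v∧w + θ₂·ι(g∧h), θ₃·(g(w) − h(v)))`. -/
def Phi (t1 t2 t3 : ℤ) (x y : Vc × Vc) : W2 × ℂ :=
  ((t1 : ℂ) • w2 x.1 y.1 + (t2 : ℂ) • iotaMap (w2 x.2 y.2),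
    (t3 : ℂ) * (x.2 ⬝ᵥ y.1 - y.2 ⬝ᵥ x.1))

/-- A map `f : V_ℂ → V_ℂ^∨` is antisymmetric if `⟨f v, w⟩ = −⟨f w, v⟩` for all `v, w`. -/
def IsAnti (f : Vc → Vc) : Prop := ∀ v w : Vc, f v ⬝ᵥ w = -(f w ⬝ᵥ v)

/-- The `i`-th standard basis vector. -/
def ef (i : Fin 4) : Vc := fun j => if j = i then 1 else 0

/-- `ω_f ∈ ⋀²(V_ℂ^∨)` attached to a map `f : V_ℂ → V_ℂ^∨`:
`ω_f(v,w) = (1/2)(⟨f w, v⟩ − ⟨f v, w⟩)`, written in coordinates `ω_f(eᵢ,eⱼ)`, `i<j`. -/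
def omegaF (f : Vc → Vc) : W2 :=
  ![(f (ef 1) ⬝ᵥ ef 0 - f (ef 0) ⬝ᵥ ef 1) / 2,
    (f (ef 2) ⬝ᵥ ef 0 - f (ef 0) ⬝ᵥ ef 2) / 2,
    (f (ef 3) ⬝ᵥ ef 0 - f (ef 0) ⬝ᵥ ef 3) / 2,
    (f (ef 2) ⬝ᵥ ef 1 - f (ef 1) ⬝ᵥ ef 2) / 2,
    (f (ef 3) ⬝ᵥ ef 1 - f (ef 1) ⬝ᵥ ef 3) / 2,
    (f (ef 3) ⬝ᵥ ef 2 - f (ef 2) ⬝ᵥ ef 3) / 2]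

/-- The Pfaffian of an antisymmetric map `f : V_ℂ → V_ℂ^∨`, defined by
`vol^∨(ω_f ∧ ω_f) = 2·Pf(f)`. -/
def pfaff (f : Vc → Vc) : ℂ := volp (omegaF f) (omegaF f) / 2

/-- Evaluation against a fixed vector, as a linear functional on the dual. -/
def dotL (u : Vc) : Vc →ₗ[ℂ] ℂ where
  toFun ℓ := ℓ ⬝ᵥ u
  map_add' x y := add_dotProduct x y u
  map_smul' c x := by simp

/-- The annihilator `Ann(U) ⊂ V_ℂ^∨` of a subspace `U ⊂ V_ℂ`. -/
def AnnS (U : Submodule ℂ Vc) : Submodule ℂ Vc :=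
  ⨅ u ∈ (U : Set Vc), LinearMap.ker (dotL u)

/-- Complex conjugation on `V_ℂ`, induced by the integral structure. -/
def cV (v : Vc) : Vc := fun i => (starRingEnd ℂ) (v i)

/-- Complex conjugation on `V_ℂ ⊕ V_ℂ^∨`, induced by the integral structure `V ⊕ V^∨`. -/
def cP (x : Vc × Vc) : Vc × Vc := (cV x.1, cV x.2)

/-- Complex conjugation on `⋀²V_ℂ ⊕ ℂ`, induced by the real structure `⋀²V_ℝ ⊕ ℝ`. -/
def cW (x : W2 × ℂ) : W2 × ℂ := (fun k => (starRingEnd ℂ) (x.1 k), (starRingEnd ℂ) x.2)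

/-- The symmetric bilinear form `(α + x·ζ, β + y·ζ) = vol(α∧β) − m·x·y` on `⋀²V_ℂ ⊕ ℂ`. -/
def Bf (m : ℚ) (x y : W2 × ℂ) : ℂ := volp x.1 y.1 - (m : ℂ) * x.2 * y.2

/-- Membership in (the affine cone over) the period domain
`D = {[σ] : (σ,σ) = 0, (σ,σ̄) > 0}`. -/
def memD (m : ℚ) (σ : W2 × ℂ) : Prop :=
  σ ≠ 0 ∧ Bf m σ σ = 0 ∧ (Bf m σ (cW σ)).im = 0 ∧ 0 < (Bf m σ (cW σ)).re

/-- Model of `⋀³V_ℂ`, with basis `e₁∧e₂∧e₃, e₀∧e₂∧e₃, e₀∧e₁∧e₃, e₀∧e₁∧e₂`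
(indexed by the missing index).  `⋀⁴V_ℂ` is modelled as `ℂ` via `vol`. -/
abbrev V3 : Type := Fin 4 → ℂ

/-- Contraction `ℓ ⌟ η ∈ V_ℂ` of `ℓ ∈ V_ℂ^∨` against `η ∈ ⋀²V_ℂ`. -/
def cont2 (l : Vc) (η : W2) : Vc :=
  ![-(l 1 * η 0) - l 2 * η 1 - l 3 * η 2,
    l 0 * η 0 - l 2 * η 3 - l 3 * η 4,
    l 0 * η 1 + l 1 * η 3 - l 3 * η 5,
    l 0 * η 2 + l 1 * η 4 + l 2 * η 5]

/-- The wedge `η ∧ v ∈ ⋀³V_ℂ` of `η ∈ ⋀²V_ℂ` with `v ∈ V_ℂ`. -/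
def wedge21 (η : W2) (v : Vc) : V3 :=
  ![η 3 * v 3 - η 4 * v 2 + η 5 * v 1,
    η 1 * v 3 - η 2 * v 2 + η 5 * v 0,
    η 0 * v 3 - η 2 * v 1 + η 4 * v 0,
    η 0 * v 2 - η 1 * v 1 + η 3 * v 0]

/-- Contraction `ℓ ⌟ β ∈ ⋀³V_ℂ` of `ℓ ∈ V_ℂ^∨` against `β ∈ ⋀⁴V_ℂ ≅ ℂ`. -/
def cont4 (l : Vc) (β : ℂ) : V3 :=
  ![l 0 * β, -(l 1 * β), l 2 * β, -(l 3 * β)]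

/-- The subspace `Z_{[α+η+β]} ⊂ V_ℂ ⊕ V_ℂ^∨` cut out by
`α·v + ℓ⌟η = 0` (component in `V_ℂ`) and `η∧v + ℓ⌟β = 0` (component in `⋀³V_ℂ`). -/
def Zset (α : ℂ) (η : W2) (β : ℂ) : Set (Vc × Vc) :=
  {p | α • p.1 + cont2 p.2 η = 0 ∧ wedge21 η p.1 + cont4 p.2 β = 0}


/-! In coordinates, `ℓ ↦ ℓ⌟η` and (up to signs) `v ↦ η∧v` are skew-symmetric `4 × 4` matrices
`C` and `W` with `C W = W C = ½ vol(η∧η) · 1 = αβ · 1` and `det C = det W = (½ vol(η∧η))²`,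
and `Z` is the kernel of `(v, ℓ) ↦ (αv + Cℓ, Wv + βℓ)`. If `β ≠ 0` then `Z` is the graph of
`-β⁻¹ W`, and symmetrically if `α ≠ 0`. If `α = β = 0` then `C W = 0` with `C, W` nonzero and
skew, hence of rank `≥ 2`; Sylvester's inequality forces both ranks to be `2` and `range W = ker C`,
so `Z = ker W × ker C` is again `4`-dimensional.

Isotropy comes from skew-symmetry: `α ℓ(v) = -ℓ(Cℓ) = 0`, `β ℓ(v) = -v(Wv) = 0`, and when
`α = β = 0` one writes `ℓ = W u` and gets `ℓ(v) = -u(W v) = 0`. Finally, if `vol(η∧η) = 0` then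
`αβ = 0` and `C`, `W` are singular, so `Z` meets `0 × V_ℂ^∨` or `V_ℂ × 0` nontrivially and is not
the graph of an injective map; otherwise `β ≠ 0` and `Z` is the graph of the invertible skew map
`-β⁻¹ W`. -/

theorem eq_zero_of_eq_neg {K : Type*} [Field K] [NeZero (2 : K)] {x : K} (h : x = -x) : x = 0 :=
  mul_left_cancel₀ two_ne_zero (by linear_combination h : (2 : K) * x = 2 * 0)

namespace Matrix

variable {K n : Type*} [Field K] [Fintype n]

theorem mulVec_dotProduct_eq_neg_of_transpose_eq_neg {A : Matrix n n K} (hA : Aᵀ = -A)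
    (v w : n → K) : (A *ᵥ v) ⬝ᵥ w = -((A *ᵥ w) ⬝ᵥ v) := by
  rw [dotProduct_comm, dotProduct_mulVec, ← mulVec_transpose, hA, neg_mulVec, neg_dotProduct]

theorem mulVec_dotProduct_self_of_transpose_eq_neg [NeZero (2 : K)] {A : Matrix n n K}
    (hA : Aᵀ = -A) (v : n → K) : (A *ᵥ v) ⬝ᵥ v = 0 :=
  eq_zero_of_eq_neg (mulVec_dotProduct_eq_neg_of_transpose_eq_neg hA v v)

theorem two_le_rank_of_transpose_eq_neg [NeZero (2 : K)] {A : Matrix n n K} (hA : Aᵀ = -A)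
    (h0 : A ≠ 0) : 2 ≤ A.rank := by
  obtain ⟨i, j, hij⟩ : ∃ i j, A i j ≠ 0 := by
    by_contra! h
    exact h0 (ext h)
  have hskew : ∀ k l, A l k = -A k l := fun k l => congrFun (congrFun hA k) l
  have hdiag : ∀ k, A k k = 0 := fun k => eq_zero_of_eq_neg (hskew k k)
  have hdet : (A.submatrix ![i, j] ![i, j]).det ≠ 0 := by
    rw [det_fin_two]
    simp [hdiag, hskew i j, hij]
  calc 2 = (A.submatrix ![i, j] ![i, j]).rank := by
        rw [rank_of_det_ne_zero hdet, Fintype.card_fin]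
    _ ≤ A.rank := rank_submatrix_le _ _ _

theorem finrank_ker_mulVecLin (A : Matrix n n K) :
    Module.finrank K (LinearMap.ker A.mulVecLin) = Fintype.card n - A.rank := by
  rw [← Module.finrank_fintype_fun_eq_card K,
    ← LinearMap.finrank_range_add_finrank_ker A.mulVecLin, rank]
  omega

theorem rank_eq_of_mul_eq_zero {A B : Matrix n n K} {m : ℕ} (hAB : A * B = 0)
    (hn : Fintype.card n = 2 * m) (hA : m ≤ A.rank) (hB : m ≤ B.rank) :
    A.rank = m ∧ B.rank = m := by
  have := rank_add_rank_le_card_of_mul_eq_zero hAB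
  omega

theorem range_mulVecLin_eq_ker_of_mul_eq_zero [DecidableEq n] {A B : Matrix n n K}
    (hAB : A * B = 0) (h : A.rank + B.rank = Fintype.card n) :
    LinearMap.range B.mulVecLin = LinearMap.ker A.mulVecLin := by
  refine Submodule.eq_of_le_of_finrank_eq ?_ ?_
  · rw [LinearMap.range_le_ker_iff, ← mulVecLin_mul, hAB, mulVecLin_zero]
  · rw [finrank_ker_mulVecLin, ← rank]
    omega

def blockKer (a : K) (C W : Matrix n n K) (b : K) : Submodule K ((n → K) × (n → K)) :=
  LinearMap.ker ((a • LinearMap.fst K _ _ + C.mulVecLin ∘ₗ LinearMap.snd K _ _).prod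
    (W.mulVecLin ∘ₗ LinearMap.fst K _ _ + b • LinearMap.snd K _ _))

variable {a b : K} {C W : Matrix n n K} {p : (n → K) × (n → K)}

@[simp]
theorem mem_blockKer :
    p ∈ blockKer a C W b ↔ a • p.1 + C *ᵥ p.2 = 0 ∧ W *ᵥ p.1 + b • p.2 = 0 := by
  simp [blockKer]

theorem map_prodComm_blockKer :
    (blockKer a C W b).map (LinearEquiv.prodComm K (n → K) (n → K)).toLinearMap =
      blockKer b W C a := by
  ext ⟨l, v⟩
  rw [Submodule.mem_map_equiv]
  change (v, l) ∈ blockKer a C W b ↔ _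
  rw [mem_blockKer, mem_blockKer, add_comm (a • v), add_comm (W *ᵥ v), and_comm]

theorem blockKer_eq_graph [DecidableEq n] (hb : b ≠ 0) (hCW : C * W = (a * b) • 1) :
    blockKer a C W b = LinearMap.graph ((-b⁻¹) • W).mulVecLin := by
  ext ⟨v, l⟩
  simp only [mem_blockKer, LinearMap.mem_graph_iff, mulVecLin_apply, smul_mulVec]
  constructor
  · rintro ⟨-, h⟩
    rw [← inv_smul_smul₀ hb l, eq_neg_of_add_eq_zero_right h, smul_neg, neg_smul]
  · rintro rfl
    refine ⟨?_, ?_⟩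
    · rw [mulVec_smul, mulVec_mulVec, hCW, smul_mulVec, one_mulVec, smul_smul, ← add_smul,
        show a + -b⁻¹ * (a * b) = 0 by field_simp; ring, zero_smul]
    · rw [smul_smul, mul_neg, mul_inv_cancel₀ hb, neg_one_smul, add_neg_cancel]

theorem finrank_blockKer_of_right_ne_zero [DecidableEq n] (hb : b ≠ 0)
    (hCW : C * W = (a * b) • 1) : Module.finrank K (blockKer a C W b) = Fintype.card n := by
  rw [blockKer_eq_graph hb hCW, LinearMap.graph_eq_range_prod,
    LinearMap.finrank_range_of_inj (fun x y h => congrArg Prod.fst h),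
    Module.finrank_fintype_fun_eq_card]

theorem finrank_blockKer_of_left_ne_zero [DecidableEq n] (ha : a ≠ 0)
    (hWC : W * C = (a * b) • 1) : Module.finrank K (blockKer a C W b) = Fintype.card n := by
  rw [← finrank_blockKer_of_right_ne_zero ha (mul_comm a b ▸ hWC), ← map_prodComm_blockKer,
    LinearEquiv.finrank_map_eq]

theorem blockKer_zero_zero :
    blockKer 0 C W 0 = (LinearMap.ker W.mulVecLin).prod (LinearMap.ker C.mulVecLin) := by
  ext p
  simp [and_comm]

theorem finrank_blockKer_zero_zero : Module.finrank K (blockKer 0 C W 0) =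
    (Fintype.card n - W.rank) + (Fintype.card n - C.rank) := by
  have hrange : (LinearMap.ker W.mulVecLin).prod (LinearMap.ker C.mulVecLin) =
      LinearMap.range ((LinearMap.ker W.mulVecLin).subtype.prodMap
        (LinearMap.ker C.mulVecLin).subtype) := by
    rw [LinearMap.range_prodMap, Submodule.range_subtype, Submodule.range_subtype]
  rw [blockKer_zero_zero, hrange, LinearMap.finrank_range_of_inj
      ((Submodule.injective_subtype _).prodMap (Submodule.injective_subtype _)),
    Module.finrank_prod, finrank_ker_mulVecLin, finrank_ker_mulVecLin]

theorem dotProduct_eq_zero_of_mem_blockKer_of_left_ne_zero [NeZero (2 : K)] (ha : a ≠ 0)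
    (hC : Cᵀ = -C) (hp : p ∈ blockKer a C W b) : p.2 ⬝ᵥ p.1 = 0 := by
  refine (mul_eq_zero.mp ?_).resolve_left ha
  calc a * (p.2 ⬝ᵥ p.1) = (a • p.1 + C *ᵥ p.2) ⬝ᵥ p.2 - (C *ᵥ p.2) ⬝ᵥ p.2 := by
        rw [add_dotProduct, smul_dotProduct, dotProduct_comm, smul_eq_mul, add_sub_cancel_right]
    _ = 0 := by
        rw [(mem_blockKer.mp hp).1, mulVec_dotProduct_self_of_transpose_eq_neg hC,
          zero_dotProduct, sub_zero]

theorem dotProduct_eq_zero_of_mem_blockKer_of_right_ne_zero [NeZero (2 : K)] (hb : b ≠ 0)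
    (hW : Wᵀ = -W) (hp : p ∈ blockKer a C W b) : p.2 ⬝ᵥ p.1 = 0 := by
  refine (mul_eq_zero.mp ?_).resolve_left hb
  calc b * (p.2 ⬝ᵥ p.1) = (W *ᵥ p.1 + b • p.2) ⬝ᵥ p.1 - (W *ᵥ p.1) ⬝ᵥ p.1 := by
        rw [add_dotProduct, smul_dotProduct, smul_eq_mul, add_sub_cancel_left]
    _ = 0 := by
        rw [(mem_blockKer.mp hp).2, mulVec_dotProduct_self_of_transpose_eq_neg hW,
          zero_dotProduct, sub_zero]

theorem dotProduct_eq_zero_of_mem_blockKer_zero_zero (hW : Wᵀ = -W)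
    (hWC : LinearMap.range W.mulVecLin = LinearMap.ker C.mulVecLin)
    (hp : p ∈ blockKer 0 C W 0) : p.2 ⬝ᵥ p.1 = 0 := by
  rw [blockKer_zero_zero] at hp
  obtain ⟨u, hu⟩ : p.2 ∈ LinearMap.range W.mulVecLin := hWC ▸ hp.2
  have hv : W *ᵥ p.1 = 0 := hp.1
  rw [← hu, mulVecLin_apply, mulVec_dotProduct_eq_neg_of_transpose_eq_neg hW, hv,
    zero_dotProduct, neg_zero]

theorem blockKer_ne_graph [DecidableEq n] (hab : a * b = 0) (hC : C.det = 0) (hW : W.det = 0)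
    {f : (n → K) →ₗ[K] (n → K)} (hf : Function.Injective f) :
    blockKer a C W b ≠ LinearMap.graph f := by
  intro hZ
  rcases mul_eq_zero.mp hab with rfl | rfl
  · obtain ⟨v, hv0, hv⟩ := exists_mulVec_eq_zero_iff.mpr hW
    have : (v, 0) ∈ LinearMap.graph f := hZ ▸ by simp [hv]
    exact hv0 (hf (by simpa using this.symm))
  · obtain ⟨l, hl0, hl⟩ := exists_mulVec_eq_zero_iff.mpr hC
    have : (0, l) ∈ LinearMap.graph f := hZ ▸ by simp [hl]
    exact hl0 (by simpa using this)

end Matrix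

def cont2Matrix (ξ : W2) : Matrix (Fin 4) (Fin 4) ℂ :=
  !![0, -ξ 0, -ξ 1, -ξ 2; ξ 0, 0, -ξ 3, -ξ 4; ξ 1, ξ 3, 0, -ξ 5; ξ 2, ξ 4, ξ 5, 0]

/-- The matrix of `v ↦ η ∧ v` with the signs of the second and fourth coordinates of `⋀³V_ℂ`
flipped, so that `ℓ ⌟ β` becomes `β • ℓ`. -/
def wedgeMatrix (η : W2) : Matrix (Fin 4) (Fin 4) ℂ :=
  !![0, η 5, -η 4, η 3; -η 5, 0, η 2, -η 1; η 4, -η 2, 0, η 0; -η 3, η 1, -η 0, 0]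

theorem cont2Matrix_mulVec (ξ : W2) (l : Vc) : cont2Matrix ξ *ᵥ l = cont2 l ξ := by
  ext i
  fin_cases i <;> simp [cont2Matrix, cont2, mulVec, dotProduct, Fin.sum_univ_four] <;> ring

theorem wedgeMatrix_mulVec_add_smul_eq_zero_iff (η : W2) (β : ℂ) (v l : Vc) :
    wedgeMatrix η *ᵥ v + β • l = 0 ↔ wedge21 η v + cont4 l β = 0 := by
  simp only [funext_iff, Fin.forall_fin_succ, IsEmpty.forall_iff]
  simp only [wedgeMatrix, Fin.isValue, cons_mulVec, dotProduct, Fin.sum_univ_four, cons_val_zero,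
    zero_mul, cons_val_one, zero_add, cons_val, neg_mul, add_zero, empty_mulVec, Pi.add_apply,
    Pi.smul_apply, smul_eq_mul, Pi.zero_apply, Fin.succ_zero_eq_one, Fin.succ_one_eq_two,
    Fin.reduceSucc, and_true, wedge21, cont4]
  constructor <;> rintro ⟨h0, h1, h2, h3⟩ <;>
    exact ⟨by linear_combination h0, by linear_combination -h1, by linear_combination h2,
      by linear_combination -h3⟩

theorem Zset_eq_blockKer (α : ℂ) (η : W2) (β : ℂ) :
    Zset α η β = blockKer α (cont2Matrix η) (wedgeMatrix η) β := by
  ext p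
  simp [Zset, cont2Matrix_mulVec, wedgeMatrix_mulVec_add_smul_eq_zero_iff]

theorem cont2Matrix_transpose (ξ : W2) : (cont2Matrix ξ)ᵀ = -cont2Matrix ξ := by
  ext i j
  fin_cases i <;> fin_cases j <;> simp [cont2Matrix]

theorem wedgeMatrix_transpose (η : W2) : (wedgeMatrix η)ᵀ = -wedgeMatrix η := by
  ext i j
  fin_cases i <;> fin_cases j <;> simp [wedgeMatrix]

theorem cont2Matrix_mul_wedgeMatrix (η : W2) :
    cont2Matrix η * wedgeMatrix η = (volp η η / 2) • 1 := by
  ext i j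
  fin_cases i <;> fin_cases j <;>
    simp [cont2Matrix, wedgeMatrix, volp, mul_apply, Fin.sum_univ_four, one_apply] <;> ring

theorem wedgeMatrix_mul_cont2Matrix (η : W2) :
    wedgeMatrix η * cont2Matrix η = (volp η η / 2) • 1 := by
  ext i j
  fin_cases i <;> fin_cases j <;>
    simp [cont2Matrix, wedgeMatrix, volp, mul_apply, Fin.sum_univ_four, one_apply] <;> ring

theorem det_cont2Matrix (ξ : W2) : (cont2Matrix ξ).det = (volp ξ ξ / 2) ^ 2 := by
  simp [cont2Matrix, volp, det_succ_row_zero, Fin.sum_univ_succ, Fin.succAbove]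
  ring

theorem det_wedgeMatrix (η : W2) : (wedgeMatrix η).det = (volp η η / 2) ^ 2 := by
  simp [wedgeMatrix, volp, det_succ_row_zero, Fin.sum_univ_succ, Fin.succAbove]
  ring

theorem cont2Matrix_ne_zero {ξ : W2} (h : ξ ≠ 0) : cont2Matrix ξ ≠ 0 := by
  contrapose! h
  have e : ∀ i j, cont2Matrix ξ i j = 0 := by simp [h]
  ext k
  fin_cases k
  · simpa [cont2Matrix] using e 1 0
  · simpa [cont2Matrix] using e 2 0
  · simpa [cont2Matrix] using e 3 0
  · simpa [cont2Matrix] using e 2 1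
  · simpa [cont2Matrix] using e 3 1
  · simpa [cont2Matrix] using e 3 2

theorem wedgeMatrix_ne_zero {η : W2} (h : η ≠ 0) : wedgeMatrix η ≠ 0 := by
  contrapose! h
  have e : ∀ i j, wedgeMatrix η i j = 0 := by simp [h]
  ext k
  fin_cases k
  · simpa [wedgeMatrix] using e 2 3
  · simpa [wedgeMatrix] using e 3 1
  · simpa [wedgeMatrix] using e 1 2
  · simpa [wedgeMatrix] using e 0 3
  · simpa [wedgeMatrix] using e 2 0
  · simpa [wedgeMatrix] using e 0 1

theorem isAnti_mulVecLin {A : Matrix (Fin 4) (Fin 4) ℂ} (hA : Aᵀ = -A) : IsAnti A.mulVecLin :=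
  mulVec_dotProduct_eq_neg_of_transpose_eq_neg hA

section

variable {α β : ℂ} {η : W2}

theorem cont2Matrix_mul_wedgeMatrix_eq_zero (hvol : volp η η = 0) :
    cont2Matrix η * wedgeMatrix η = 0 := by
  rw [cont2Matrix_mul_wedgeMatrix, hvol, zero_div, zero_smul]

theorem rank_cont2Matrix_eq_two_and_rank_wedgeMatrix_eq_two (hη : η ≠ 0)
    (hvol : volp η η = 0) : (cont2Matrix η).rank = 2 ∧ (wedgeMatrix η).rank = 2 :=
  rank_eq_of_mul_eq_zero (cont2Matrix_mul_wedgeMatrix_eq_zero hvol) rfl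
    (two_le_rank_of_transpose_eq_neg (cont2Matrix_transpose η) (cont2Matrix_ne_zero hη))
    (two_le_rank_of_transpose_eq_neg (wedgeMatrix_transpose η) (wedgeMatrix_ne_zero hη))

theorem finrank_blockKer_cont2Matrix_wedgeMatrix (h0 : ¬(α = 0 ∧ η = 0 ∧ β = 0))
    (hq : volp η η - 2 * α * β = 0) :
    Module.finrank ℂ (blockKer α (cont2Matrix η) (wedgeMatrix η) β) = 4 := by
  have hvol : volp η η / 2 = α * β := by linear_combination hq / 2
  by_cases hβ : β = 0
  · by_cases hα : α = 0
    · subst hα hβ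
      have hη : η ≠ 0 := fun h => h0 ⟨rfl, h, rfl⟩
      obtain ⟨hC, hW⟩ := rank_cont2Matrix_eq_two_and_rank_wedgeMatrix_eq_two hη
        (by linear_combination 2 * hvol)
      rw [finrank_blockKer_zero_zero, hC, hW]
      rfl
    · exact finrank_blockKer_of_left_ne_zero hα (by rw [wedgeMatrix_mul_cont2Matrix, hvol])
  · exact finrank_blockKer_of_right_ne_zero hβ (by rw [cont2Matrix_mul_wedgeMatrix, hvol])

theorem dotProduct_eq_zero_of_mem_Zset (h0 : ¬(α = 0 ∧ η = 0 ∧ β = 0))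
    (hq : volp η η - 2 * α * β = 0) {p : Vc × Vc} (hp : p ∈ Zset α η β) : p.2 ⬝ᵥ p.1 = 0 := by
  rw [Zset_eq_blockKer] at hp
  by_cases hα : α = 0
  · by_cases hβ : β = 0
    · subst hα hβ
      have hη : η ≠ 0 := fun h => h0 ⟨rfl, h, rfl⟩
      have hvol : volp η η = 0 := by linear_combination hq
      obtain ⟨hC, hW⟩ := rank_cont2Matrix_eq_two_and_rank_wedgeMatrix_eq_two hη hvol
      exact dotProduct_eq_zero_of_mem_blockKer_zero_zero (wedgeMatrix_transpose η)
        (range_mulVecLin_eq_ker_of_mul_eq_zero (cont2Matrix_mul_wedgeMatrix_eq_zero hvol)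
          (by rw [hC, hW]; rfl)) hp
    · exact dotProduct_eq_zero_of_mem_blockKer_of_right_ne_zero hβ (wedgeMatrix_transpose η) hp
  · exact dotProduct_eq_zero_of_mem_blockKer_of_left_ne_zero hα (cont2Matrix_transpose η) hp

theorem exists_isAnti_bijective_graph_iff (hq : volp η η - 2 * α * β = 0) :
    (∃ f : Vc →ₗ[ℂ] Vc, IsAnti ⇑f ∧ Function.Bijective ⇑f ∧
        Zset α η β = {p : Vc × Vc | p.2 = f p.1}) ↔ volp η η ≠ 0 := by
  have hvol : volp η η / 2 = α * β := by linear_combination hq / 2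
  constructor
  · rintro ⟨f, -, hf, hZ⟩ h
    have hgraph : blockKer α (cont2Matrix η) (wedgeMatrix η) β = LinearMap.graph f :=
      SetLike.coe_injective (by rw [← Zset_eq_blockKer, hZ]; rfl)
    refine blockKer_ne_graph ?_ ?_ ?_ hf.injective hgraph
    · rw [← hvol, h, zero_div]
    · rw [det_cont2Matrix, h]; simp
    · rw [det_wedgeMatrix, h]; simp
  · intro h
    have hβ : β ≠ 0 := by
      rintro rfl
      exact h (by linear_combination hq)
    have hunit : IsUnit ((-β⁻¹) • wedgeMatrix η) := by
      rw [isUnit_iff_isUnit_det, det_smul, det_wedgeMatrix, isUnit_iff_ne_zero]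
      simp [hβ, h]
    refine ⟨((-β⁻¹) • wedgeMatrix η).mulVecLin, isAnti_mulVecLin ?_,
      ⟨mulVec_injective_iff_isUnit.mpr hunit, mulVec_surjective_iff_isUnit.mpr hunit⟩, ?_⟩
    · rw [transpose_smul, wedgeMatrix_transpose, smul_neg]
    · rw [Zset_eq_blockKer, blockKer_eq_graph hβ (by rw [cont2Matrix_mul_wedgeMatrix, hvol])]
      rfl

end

/-- **Proposition 3.17 (O'Grady).** Let `α + η + β ∈ ℂ ⊕ ⋀²V_ℂ ⊕ ⋀⁴V_ℂ` be nonzero with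
`vol(η∧η − 2αβ) = 0` (i.e. `[α+η+β] ∈ 𝐐⁺`).  Then `Z_{[α+η+β]}` is a 4-dimensional
subspace of `V_ℂ ⊕ V_ℂ^∨` on which the quadratic form `q(v,ℓ) = 2·ℓ(v)` vanishes
identically (a maximal isotropic subspace), and `Z_{[α+η+β]}` is the graph of a
nondegenerate antisymmetric map `f : V_ℂ → V_ℂ^∨` iff `η∧η ≠ 0`. -/
theorem statement9 (α : ℂ) (η : W2) (β : ℂ)
    (h0 : ¬(α = 0 ∧ η = 0 ∧ β = 0))
    (hq : volp η η - 2 * α * β = 0) :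
    (∃ S : Submodule ℂ (Vc × Vc), (S : Set (Vc × Vc)) = Zset α η β ∧
      Module.finrank ℂ S = 4) ∧
    (∀ p ∈ Zset α η β, 2 * (p.2 ⬝ᵥ p.1) = 0) ∧
    ((∃ f : Vc →ₗ[ℂ] Vc, IsAnti ⇑f ∧ Function.Bijective ⇑f ∧
        Zset α η β = {p : Vc × Vc | p.2 = f p.1}) ↔ volp η η ≠ 0) :=
  ⟨⟨blockKer α (cont2Matrix η) (wedgeMatrix η) β, (Zset_eq_blockKer α η β).symm,
      finrank_blockKer_cont2Matrix_wedgeMatrix h0 hq⟩,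
    fun _ hp => by rw [dotProduct_eq_zero_of_mem_Zset h0 hq hp, mul_zero],
    exists_isAnti_bijective_graph_iff hq⟩
end
end

section
/- For every positive integer e, taking (c,s) = (2,1) and setting g := gcd(3,e), the alternating form E associated to M(2,e,1) has symplectic elementary divisors (1, g, 3(4e−3)/g, 3(4e−3)): there exists a ℤ-basis {u₁,…,u₄,w₁,…,w₄} of ℤ⁴ ⊕ ℤ⁴ with E(uᵢ,uⱼ) = E(wᵢ,wⱼ) = 0 and E(uᵢ,wⱼ) = dᵢ·δᵢⱼ, where (d₁,d₂,d₃,d₄) = (1, g, 3(4e−3)/g, 3(4e−3)). -/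
open Matrix

/-- The matrix `M(c,e,s)` with rows `(3c,3s,0,0), (3s,ce,0,0), (0,0,c,3s), (0,0,3s,3ce)`. -/
def Mker (c e s : ℤ) : Matrix (Fin 4) (Fin 4) ℤ :=
  !![3*c, 3*s, 0, 0;
     3*s, c*e, 0, 0;
     0,   0,   c, 3*s;
     0,   0,   3*s, 3*c*e]

/-- The alternating ℤ-bilinear form on `L = ℤ⁴ ⊕ ℤ⁴` with `E(αᵢ,αⱼ) = E(βᵢ,βⱼ) = 0` and
`E(αᵢ,βⱼ) = M i j` on the standard bases of the two summands. -/
def Eform (M : Matrix (Fin 4) (Fin 4) ℤ) (x y : (Fin 4 → ℤ) × (Fin 4 → ℤ)) : ℤ :=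
  ∑ i, ∑ j, M i j * (x.1 i * y.2 j - y.1 i * x.2 j)

/-!
`M(2,e,1)` is block diagonal with blocks `A = [[6,3],[3,2e]]` and `B = [[2,3],[3,6e]]`, both of
determinant `3(4e-3)`. The entries of `B` are coprime and `B` reduces to `diag(1, 3(4e-3))`. For
`A`, a Bézout relation `3x + 2ey = g` with `g = gcd(3,e) = gcd(3,2e)` says `(0,1) A (x,y)ᵀ = g`;
completing `(0,1)` and `(x,y)` to unimodular matrices reduces `A` to `diag(g, 3(4e-3)/g)`. The rows
of the two resulting unimodular transforms, paired with `0`, form the required basis.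
-/

section RowBasis

variable {n R : Type*} [Fintype n] [DecidableEq n] [CommRing R]

noncomputable def Matrix.rowBasis (U : Matrix n n R) [Invertible U] : Module.Basis n R (n → R) :=
  (Pi.basisFun R n).map (Uᵀ.toLinearEquiv' inferInstance)

@[simp]
lemma Matrix.rowBasis_apply (U : Matrix n n R) [Invertible U] (i : n) : U.rowBasis i = U i := by
  ext j
  rw [Matrix.rowBasis, Module.Basis.map_apply, Pi.basisFun_apply]
  change toLin' Uᵀ (Pi.single i 1) j = U i j
  simp [mulVec_single]

end RowBasis

section Eform

variable (M : Matrix (Fin 4) (Fin 4) ℤ) (a b : Fin 4 → ℤ)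

lemma Eform_inl_inl : Eform M (a, 0) (b, 0) = 0 := by simp [Eform]

lemma Eform_inr_inr : Eform M (0, a) (0, b) = 0 := by simp [Eform]

lemma Eform_inl_inr : Eform M (a, 0) (0, b) = a ⬝ᵥ M *ᵥ b := by
  simp [Eform, dotProduct, mulVec, Finset.mul_sum, mul_left_comm]

lemma Eform_row_row (U V : Matrix (Fin 4) (Fin 4) ℤ) (i j : Fin 4) :
    Eform M (U i, 0) (0, V j) = (U * M * Vᵀ) i j := by
  rw [Eform_inl_inr, dotProduct_mulVec, Matrix.mul_apply']
  rfl

end Eform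

theorem exists_basis_Eform_eq_diagonal {M U V : Matrix (Fin 4) (Fin 4) ℤ} [Invertible U]
    [Invertible V] {d : Fin 4 → ℤ} (h : U * M * Vᵀ = diagonal d) :
    ∃ B : Module.Basis (Fin 4 ⊕ Fin 4) ℤ ((Fin 4 → ℤ) × (Fin 4 → ℤ)),
      (∀ i j, Eform M (B (Sum.inl i)) (B (Sum.inl j)) = 0) ∧
      (∀ i j, Eform M (B (Sum.inr i)) (B (Sum.inr j)) = 0) ∧
      (∀ i j, Eform M (B (Sum.inl i)) (B (Sum.inr j)) = if i = j then d i else 0) := by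
  refine ⟨U.rowBasis.prod V.rowBasis, fun i j => ?_, fun i j => ?_, fun i j => ?_⟩ <;>
    simp only [Module.Basis.prod_apply, LinearMap.coe_inl, LinearMap.coe_inr, Function.comp_apply,
      Sum.elim_inl, Sum.elim_inr, Matrix.rowBasis_apply]
  · exact Eform_inl_inl M _ _
  · exact Eform_inr_inr M _ _
  · rw [Eform_row_row, h, diagonal_apply]

def leftTransform (s : ℤ) : Matrix (Fin 4) (Fin 4) ℤ :=
  !![0, 0, -1, 1; 0, 1, 0, 0; -1, s, 0, 0; 0, 0, -3, 2]

def leftTransformInv (s : ℤ) : Matrix (Fin 4) (Fin 4) ℤ :=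
  !![0, s, -1, 0; 0, 1, 0, 0; 2, 0, 0, -1; 3, 0, 0, -1]

def rightTransform (e x y f t : ℤ) : Matrix (Fin 4) (Fin 4) ℤ :=
  !![0, 0, 1, 0; x, y, 0, 0; -2 * f, t, 0, 0; 0, 0, 3 - 6 * e, 1]

def rightTransformInv (e x y f t : ℤ) : Matrix (Fin 4) (Fin 4) ℤ :=
  !![0, t, -y, 0; 0, 2 * f, x, 0; 1, 0, 0, 0; 6 * e - 3, 0, 0, 1]

lemma leftTransform_mul_leftTransformInv (s : ℤ) : leftTransform s * leftTransformInv s = 1 := by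
  ext i j
  fin_cases i <;> fin_cases j <;>
    simp [leftTransform, leftTransformInv, mul_apply, Fin.sum_univ_four]

lemma rightTransform_mul_rightTransformInv (e : ℤ) {x y f t : ℤ} (h : x * t + 2 * f * y = 1) :
    rightTransform e x y f t * rightTransformInv e x y f t = 1 := by
  ext i j
  fin_cases i <;> fin_cases j <;>
    simp [rightTransform, rightTransformInv, mul_apply, Fin.sum_univ_four] <;> grind

lemma leftTransform_mul_Mker_mul_rightTransform {e g x y f t : ℤ} (hxy : 3 * x + 2 * e * y = g)
    (ht : 3 = g * t) (hf : e = g * f) :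
    leftTransform (t * (2 * x + y)) * Mker 2 e 1 * (rightTransform e x y f t)ᵀ =
      diagonal ![1, g, 12 * f - 3 * t, 3 * (4 * e - 3)] := by
  ext i j
  fin_cases i <;> fin_cases j <;>
    simp [leftTransform, rightTransform, Mker, mul_apply, Fin.sum_univ_four] <;> grind

theorem statement12_general (e : ℤ) :
    ∃ B : Module.Basis (Fin 4 ⊕ Fin 4) ℤ ((Fin 4 → ℤ) × (Fin 4 → ℤ)),
      (∀ i j, Eform (Mker 2 e 1) (B (Sum.inl i)) (B (Sum.inl j)) = 0) ∧
      (∀ i j, Eform (Mker 2 e 1) (B (Sum.inr i)) (B (Sum.inr j)) = 0) ∧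
      (∀ i j, Eform (Mker 2 e 1) (B (Sum.inl i)) (B (Sum.inr j)) =
        if i = j then ![1, (Int.gcd 3 e : ℤ), 3*(4*e-3) / (Int.gcd 3 e : ℤ), 3*(4*e-3)] i else 0) := by
  set g : ℤ := (Int.gcd 3 e : ℤ)
  have hg : g ≠ 0 := Int.natCast_ne_zero.mpr (Int.gcd_ne_zero_left (by norm_num))
  obtain ⟨t, ht⟩ : g ∣ 3 := Int.gcd_dvd_left 3 e
  obtain ⟨f, hf⟩ : g ∣ e := Int.gcd_dvd_right 3 e
  set x := Int.gcdA 3 e + e * Int.gcdB 3 e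
  set y := -Int.gcdB 3 e
  have hxy : 3 * x + 2 * e * y = g := by linear_combination (Int.gcd_eq_gcd_ab 3 e).symm
  have hdet : x * t + 2 * f * y = 1 :=
    mul_left_cancel₀ hg (by linear_combination x * ht.symm + 2 * y * hf.symm + hxy)
  have hquot : 3 * (4 * e - 3) / g = 12 * f - 3 * t := by
    rw [show 3 * (4 * e - 3) = g * (12 * f - 3 * t) by linear_combination 12 * hf - 3 * ht,
      Int.mul_ediv_cancel_left _ hg]
  let _ := invertibleOfRightInverse _ _ (leftTransform_mul_leftTransformInv (t * (2 * x + y)))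
  let _ := invertibleOfRightInverse _ _ (rightTransform_mul_rightTransformInv e hdet)
  have hdiag := leftTransform_mul_Mker_mul_rightTransform hxy ht hf
  rw [← hquot] at hdiag
  exact exists_basis_Eform_eq_diagonal hdiag

/-- Elementary divisors (1, g, 3(4e−3)/g, 3(4e−3)), g = gcd(3,e), for the polarization with (c,s) = (2,1) (divisibility 2). -/
theorem statement12 (e : ℤ) (he : 0 < e) :
    ∃ B : Module.Basis (Fin 4 ⊕ Fin 4) ℤ ((Fin 4 → ℤ) × (Fin 4 → ℤ)),
      (∀ i j, Eform (Mker 2 e 1) (B (Sum.inl i)) (B (Sum.inl j)) = 0) ∧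
      (∀ i j, Eform (Mker 2 e 1) (B (Sum.inr i)) (B (Sum.inr j)) = 0) ∧
      (∀ i j, Eform (Mker 2 e 1) (B (Sum.inl i)) (B (Sum.inr j)) =
        if i = j then ![1, (Int.gcd 3 e : ℤ), 3*(4*e-3) / (Int.gcd 3 e : ℤ), 3*(4*e-3)] i else 0) :=
  statement12_general e
end

section
/- Assume θ₁, θ₂, θ₃ are all nonzero, m ∈ ℚ is positive, θ₁·θ₂ = 2m·θ₃², and the setup of the context. Then ⟨Ψ(x), Ψ(y)⟩_{θ,h} = (N − b²)·⟨x,y⟩_{θ,h} for all x,y ∈ V_ℂ ⊕ V_ℂ^∨. -/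
/-!
Concrete model of the linear algebra of O'Grady's "Compact tori associated to hyperkähler
manifolds of Kummer type".

`V` is a free ℤ-module of rank 4; we model `V_ℂ = V ⊗ ℂ` as `Fin 4 → ℂ` (standard integral
structure), and its dual `V_ℂ^∨` also as `Fin 4 → ℂ` via the dot-product pairing
`⟨ℓ, v⟩ = ℓ ⬝ᵥ v` (dual basis coordinates).  The volume form `vol : ⋀⁴V → ℤ` is the one
with `vol(e₀∧e₁∧e₂∧e₃) = 1`.  We model `⋀²V_ℂ` (and `⋀²V_ℂ^∨`) as `Fin 6 → ℂ` using the
basis `e₀∧e₁, e₀∧e₂, e₀∧e₃, e₁∧e₂, e₁∧e₃, e₂∧e₃` (resp. the dual one).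
-/

noncomputable section

open Matrix Complex

/-- The class `h₀ = c(e·v₁^∨∧v₂^∨ + v₃^∨∧v₄^∨) ∈ ⋀²V^∨`, in dual coordinates. -/
def h0v (c e : ℤ) : W2 := ![(c : ℂ) * (e : ℂ), 0, 0, 0, 0, (c : ℂ)]

/-- Evaluation of `h = h₀ + s·ζ^∨ ∈ (⋀²V ⊕ ℤ)^∨` on `⋀²V_ℂ ⊕ ℂ`. -/
def hev (c e s : ℤ) (x : W2 × ℂ) : ℂ :=
  (c : ℂ) * (e : ℂ) * x.1 0 + (c : ℂ) * x.1 5 + (s : ℂ) * x.2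

/-- `N = θ₁/(c²·e·θ₂)`. -/
def Nq (t1 t2 c e : ℤ) : ℚ := (t1 : ℚ) / ((c : ℚ) ^ 2 * (e : ℚ) * (t2 : ℚ))

/-- `b = s·θ₃/(c²·e·θ₂)`. -/
def bq (t2 t3 c e s : ℤ) : ℚ := (s : ℚ) * (t3 : ℚ) / ((c : ℚ) ^ 2 * (e : ℚ) * (t2 : ℚ))

/-- The endomorphism `Ψ(v,ℓ) = (g⁻¹(ℓ) − b·v, b·ℓ − N·g(v))` of `V_ℂ ⊕ V_ℂ^∨`. -/
def PsiL (g : Vc ≃ₗ[ℂ] Vc) (N b : ℚ) : (Vc × Vc) →ₗ[ℂ] Vc × Vc :=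
  LinearMap.prod
    (g.symm.toLinearMap ∘ₗ LinearMap.snd ℂ Vc Vc - (b : ℂ) • LinearMap.fst ℂ Vc Vc)
    ((b : ℂ) • LinearMap.snd ℂ Vc Vc - (N : ℂ) • (g.toLinearMap ∘ₗ LinearMap.fst ℂ Vc Vc))

/-- The rational subspace `V_ℚ ⊕ V_ℚ^∨ ⊂ V_ℂ ⊕ V_ℂ^∨`. -/
def ratSet : Set (Vc × Vc) :=
  {p | (∀ i, ∃ q : ℚ, p.1 i = (q : ℂ)) ∧ (∀ i, ∃ q : ℚ, p.2 i = (q : ℂ))}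

/-- The complex number `i·√(N − b²)`. -/
def sqNb (N b : ℚ) : ℂ := Complex.I * ((Real.sqrt ((N - b ^ 2 : ℚ) : ℝ) : ℝ) : ℂ)

/-- The alternating form `⟨x,y⟩_{θ,h} = ⟨h, Φ_θ(x∧y)⟩` on `V_ℂ ⊕ V_ℂ^∨`. -/
def Eth (t1 t2 t3 c e s : ℤ) (x y : Vc × Vc) : ℂ := hev c e s (Phi t1 t2 t3 x y)

/-!
Write elements of `V_ℂ ⊕ V_ℂ^∨` as `(v, g q)`. An antisymmetric map is determined by its form, so
`g = skewOf h₀`, and `⟨(v, g q), (w, g r)⟩_{θ,h}` is `c²eθ₂` times the form with Gram matrix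
`M = [[N, -b], [-b, 1]]` with respect to `ω(v, w) = h₀(v ∧ w)`; the factor `c²e` in front of
`ω(q, r)` is the Pfaffian of `g`. In these coordinates `Ψ` acts by `A = [[-b, 1], [-N, b]]`, and
`AᵀMA = det A · M = (N - b²) · M`.
-/

section TwistedForm

variable {R M : Type*} [CommRing R] [AddCommGroup M] [Module R M]

def twistedForm (ω : M →ₗ[R] M →ₗ[R] R) (N b : R) (x y : M × M) : R :=
  N * ω x.1 y.1 + ω x.2 y.2 - b * (ω x.2 y.1 + ω x.1 y.2)

def twistMap (N b : R) (x : M × M) : M × M := (x.2 - b • x.1, b • x.2 - N • x.1)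

theorem twistedForm_twistMap (ω : M →ₗ[R] M →ₗ[R] R) (N b : R) (x y : M × M) :
    twistedForm ω N b (twistMap N b x) (twistMap N b y) =
      (N - b ^ 2) * twistedForm ω N b x y := by
  simp only [twistedForm, twistMap, map_sub, map_smul, LinearMap.sub_apply, LinearMap.smul_apply,
    smul_eq_mul]
  ring

end TwistedForm

def skewOf (Ω : W2) (w : Vc) : Vc :=
  ![Ω 0 * w 1 + Ω 1 * w 2 + Ω 2 * w 3, -Ω 0 * w 0 + Ω 3 * w 2 + Ω 4 * w 3,
    -Ω 1 * w 0 - Ω 3 * w 1 + Ω 5 * w 3, -Ω 2 * w 0 - Ω 4 * w 1 - Ω 5 * w 2]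

theorem dotProduct_ef (ℓ : Vc) (j : Fin 4) : ℓ ⬝ᵥ ef j = ℓ j := by
  simp [dotProduct, ef]

theorem IsAnti.eq_skewOf {F : Type*} [FunLike F Vc Vc] [LinearMapClass F ℂ Vc Vc] {f : F}
    (hf : IsAnti f) : ⇑f = skewOf (omegaF f) := by
  have entry (i j : Fin 4) : f (ef j) i = (f (ef j) ⬝ᵥ ef i - f (ef i) ⬝ᵥ ef j) / 2 := by
    rw [hf (ef i) (ef j), dotProduct_ef]; ring
  funext w i
  have hw : f w = w 0 • f (ef 0) + w 1 • f (ef 1) + w 2 • f (ef 2) + w 3 • f (ef 3) := by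
    conv_lhs => rw [show w = w 0 • ef 0 + w 1 • ef 1 + w 2 • ef 2 + w 3 • ef 3 by
      funext j; fin_cases j <;> simp [ef]]
    simp only [map_add, map_smul]
  simp only [hw, Pi.add_apply, Pi.smul_apply, smul_eq_mul]
  fin_cases i <;>
    simp only [Fin.zero_eta, Fin.mk_one, Fin.reduceFinMk, skewOf, omegaF, entry, cons_val_zero,
      cons_val_one, cons_val, sub_self, zero_div, mul_zero, zero_add, add_zero] <;> ring

def omegaBilin (Ω : W2) : Vc →ₗ[ℂ] Vc →ₗ[ℂ] ℂ :=
  LinearMap.mk₂ ℂ (fun v w => Ω ⬝ᵥ w2 v w)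
    (by intros; simp only [dotProduct, Fin.sum_univ_six, w2, Pi.add_apply, cons_val_zero,
      cons_val_one, cons_val]; ring)
    (by intros; simp only [dotProduct, Fin.sum_univ_six, w2, Pi.smul_apply, smul_eq_mul,
      cons_val_zero, cons_val_one, cons_val]; ring)
    (by intros; simp only [dotProduct, Fin.sum_univ_six, w2, Pi.add_apply, cons_val_zero,
      cons_val_one, cons_val]; ring)
    (by intros; simp only [dotProduct, Fin.sum_univ_six, w2, Pi.smul_apply, smul_eq_mul,
      cons_val_zero, cons_val_one, cons_val]; ring)

theorem omegaBilin_apply (Ω : W2) (v w : Vc) : omegaBilin Ω v w = Ω ⬝ᵥ w2 v w := rfl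

theorem omegaBilin_swap (Ω : W2) (v w : Vc) : omegaBilin Ω w v = -omegaBilin Ω v w := by
  simp only [omegaBilin_apply, dotProduct, Fin.sum_univ_six, w2, cons_val_zero, cons_val_one,
    cons_val]
  ring

theorem skewOf_dotProduct (Ω : W2) (v w : Vc) : skewOf Ω w ⬝ᵥ v = omegaBilin Ω v w := by
  simp only [omegaBilin_apply, dotProduct, Fin.sum_univ_four, Fin.sum_univ_six, w2, skewOf,
    cons_val_zero, cons_val_one, cons_val]
  ring

/-- The Pfaffian identity `Ω(f q ∧ f r) = Pf(f) · Ω(q, r)` for `f = skewOf Ω`. -/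
theorem volp_w2_skewOf (Ω : W2) (q r : Vc) :
    volp Ω (w2 (skewOf Ω q) (skewOf Ω r)) = volp Ω Ω / 2 * omegaBilin Ω q r := by
  simp only [omegaBilin_apply, dotProduct, Fin.sum_univ_six, w2, skewOf, volp, cons_val_zero,
    cons_val_one, cons_val]
  ring

theorem dotProduct_iotaMap (Ω X : W2) : Ω ⬝ᵥ iotaMap X = volp Ω X := by
  simp only [dotProduct, Fin.sum_univ_six, iotaMap, volp, cons_val_zero, cons_val_one, cons_val]
  ring

theorem volp_h0v (c e : ℤ) : volp (h0v c e) (h0v c e) / 2 = (c : ℂ) ^ 2 * e := by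
  simp only [volp, h0v, cons_val_zero, cons_val_one, cons_val]
  ring

theorem hev_eq (c e s : ℤ) (z : W2 × ℂ) : hev c e s z = h0v c e ⬝ᵥ z.1 + s * z.2 := by
  simp [hev, h0v, dotProduct, Fin.sum_univ_six]

theorem Eth_skewOf (t1 t2 t3 c e s : ℤ) (x y : Vc × Vc) :
    Eth t1 t2 t3 c e s (x.1, skewOf (h0v c e) x.2) (y.1, skewOf (h0v c e) y.2) =
      t1 * omegaBilin (h0v c e) x.1 y.1 + t2 * ((c : ℂ) ^ 2 * e) * omegaBilin (h0v c e) x.2 y.2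
        - s * t3 * (omegaBilin (h0v c e) x.2 y.1 + omegaBilin (h0v c e) x.1 y.2) := by
  simp only [Eth, hev_eq, Phi, dotProduct_add, dotProduct_smul, smul_eq_mul, dotProduct_iotaMap,
    volp_w2_skewOf, volp_h0v, skewOf_dotProduct, ← omegaBilin_apply]
  rw [omegaBilin_swap _ x.2 y.1]
  ring

theorem Eth_skewOf_eq_twistedForm (t1 t2 t3 c e s : ℤ) (ht2 : t2 ≠ 0) (hc : c ≠ 0) (he : e ≠ 0)
    (x y : Vc × Vc) :
    Eth t1 t2 t3 c e s (x.1, skewOf (h0v c e) x.2) (y.1, skewOf (h0v c e) y.2) =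
      (c ^ 2 * e * t2 : ℂ) *
        twistedForm (omegaBilin (h0v c e)) (Nq t1 t2 c e : ℂ) (bq t2 t3 c e s : ℂ) x y := by
  rw [Eth_skewOf, twistedForm, Nq, bq]
  push_cast
  field_simp

theorem PsiL_apply (g : Vc ≃ₗ[ℂ] Vc) (N b : ℚ) (x : Vc × Vc) :
    PsiL g N b (x.1, g x.2) = ((twistMap (N : ℂ) b x).1, g (twistMap (N : ℂ) b x).2) := by
  simp [PsiL, twistMap]

theorem statement16_general (t1 t2 t3 : ℤ) (h2 : t2 ≠ 0)
    (c e s : ℤ) (hc : 0 < c) (he : 0 < e)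
    (g : Vc ≃ₗ[ℂ] Vc) (hg : IsAnti ⇑g) (hgw : omegaF ⇑g = h0v c e) :
    ∀ x y : Vc × Vc,
      Eth t1 t2 t3 c e s (PsiL g (Nq t1 t2 c e) (bq t2 t3 c e s) x)
          (PsiL g (Nq t1 t2 c e) (bq t2 t3 c e s) y) =
        ((Nq t1 t2 c e - bq t2 t3 c e s ^ 2 : ℚ) : ℂ) * Eth t1 t2 t3 c e s x y := by
  have hg_eq : ⇑g = skewOf (h0v c e) := hgw ▸ hg.eq_skewOf
  have h_form := Eth_skewOf_eq_twistedForm t1 t2 t3 c e s h2 hc.ne' he.ne'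
  intro x y
  obtain ⟨x, rfl⟩ : ∃ x' : Vc × Vc, x = (x'.1, g x'.2) := ⟨(x.1, g.symm x.2), by simp⟩
  obtain ⟨y, rfl⟩ : ∃ y' : Vc × Vc, y = (y'.1, g y'.2) := ⟨(y.1, g.symm y.2), by simp⟩
  simp only [PsiL_apply]
  simp only [hg_eq, h_form, twistedForm_twistMap]
  push_cast
  ring

/-- **(From the proof of Theorem 5.2 in O'Grady.)** With the setup as in the context
(`θᵢ ≠ 0`, `m > 0`, `θ₁θ₂ = 2mθ₃²`, `c, e > 0`, `g` antisymmetric with `ω_g = h₀`),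
`Ψ` multiplies the alternating form `⟨x,y⟩_{θ,h} = ⟨h, Φ_θ(x∧y)⟩` by `N − b²`:
`⟨Ψx, Ψy⟩_{θ,h} = (N − b²)·⟨x,y⟩_{θ,h}` for all `x, y ∈ V_ℂ ⊕ V_ℂ^∨`. -/
theorem statement16 (t1 t2 t3 : ℤ) (h1 : t1 ≠ 0) (h2 : t2 ≠ 0) (h3 : t3 ≠ 0)
    (m : ℚ) (hm : 0 < m) (hrel : (t1 : ℚ) * t2 = 2 * m * t3 ^ 2)
    (c e s : ℤ) (hc : 0 < c) (he : 0 < e)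
    (g : Vc ≃ₗ[ℂ] Vc) (hg : IsAnti ⇑g) (hgw : omegaF ⇑g = h0v c e) :
    ∀ x y : Vc × Vc,
      Eth t1 t2 t3 c e s (PsiL g (Nq t1 t2 c e) (bq t2 t3 c e s) x)
          (PsiL g (Nq t1 t2 c e) (bq t2 t3 c e s) y) =
        ((Nq t1 t2 c e - bq t2 t3 c e s ^ 2 : ℚ) : ℂ) * Eth t1 t2 t3 c e s x y :=
  statement16_general t1 t2 t3 h2 c e s hc he g hg hgw
end
end
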